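/- arXiv:2403.05813 — 4 statements merged into one kernel-verified Lean document; each statement's English description precedes it below -/
import Mathlib

section
/- Let α > 0, δ ∈ (0, α), {U_n} i.i.d. Uniform(0,1). Define W*_0 = 1 - U_0^(1/α) and W*_n = min{1 - (1 - W*_{n-1})^(α/(α-δ)), 1 - U_n^(1/δ)} for n ≥ 1. Then for every n, P(W*_n ≤ w) = 1 - (1-w)^α for 0 < w < 1; in particular the process is stationary with CPFD(α) marginals. -/
open MeasureTheory ProbabilityTheory Real Set

/-!
With `S n = 1 - W n` the recursion reads `S 0 = U 0 ^ (1/α)` and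
`S (n+1) = max (S n ^ (α/(α-δ))) (U (n+1) ^ (1/δ))`, and `S n` is a function of `U 0, …, U n`,
hence independent of `U (n+1)`. The laws `ℙ(S < t) = t ^ p` on `[0, 1]` are stable under
`S ↦ S ^ c` (the exponent becomes `p / c`) and under the maximum of independent variables (the
exponents add). So if `ℙ(S n < t) = t ^ α`, the two terms of the maximum have exponents `α - δ`
and `δ`, and `ℙ(S (n+1) < t) = t ^ α` again.
-/

section PowerDistrib

variable {Ω : Type*} [MeasurableSpace Ω] {μ : Measure Ω}

-- Including `t = 0` makes `0 ≤ X` almost surely part of the definition.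
def HasPowerDistrib (X : Ω → ℝ) (p : ℝ) (μ : Measure Ω) : Prop :=
  ∀ t ∈ Icc (0 : ℝ) 1, μ (X ⁻¹' Iio t) = ENNReal.ofReal (t ^ p)

lemma hasPowerDistrib_rpow_inv_of_isUniform {U : Ω → ℝ} (hU : pdf.IsUniform U (Ioo 0 1) μ)
    {p : ℝ} (hp : 0 < p) : HasPowerDistrib (fun ω ↦ U ω ^ p⁻¹) p μ := by
  intro t ⟨ht0, ht1⟩
  have hmeas : MeasurableSet {x : ℝ | x ^ p⁻¹ < t} :=
    measurableSet_lt (by fun_prop) measurable_const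
  have hinter : Ioo 0 1 ∩ {x : ℝ | x ^ p⁻¹ < t} = Ioo 0 (t ^ p) := by
    ext x
    simp only [mem_inter_iff, mem_Ioo, mem_ofPred_eq]
    constructor
    · rintro ⟨⟨hx0, -⟩, hx⟩
      exact ⟨hx0, (rpow_inv_lt_iff_of_pos hx0.le ht0 hp).mp hx⟩
    · rintro ⟨hx0, hx⟩
      exact ⟨⟨hx0, hx.trans_le (rpow_le_one ht0 ht1 hp.le)⟩,
        (rpow_inv_lt_iff_of_pos hx0.le ht0 hp).mpr hx⟩
  change μ (U ⁻¹' {x | x ^ p⁻¹ < t}) = _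
  rw [hU.measure_preimage (by simp) (by simp) hmeas, hinter]
  simp

lemma HasPowerDistrib.ae_nonneg {X : Ω → ℝ} {p : ℝ} (hX : HasPowerDistrib X p μ)
    (hp : p ≠ 0) : ∀ᵐ ω ∂μ, 0 ≤ X ω := by
  have h := hX 0 ⟨le_rfl, zero_le_one⟩
  rw [zero_rpow hp, ENNReal.ofReal_zero] at h
  filter_upwards [measure_eq_zero_iff_ae_notMem.mp h] with ω hω
  simpa using hω

lemma HasPowerDistrib.rpow {X : Ω → ℝ} {p c : ℝ} (hX : HasPowerDistrib X p μ) (hp : p ≠ 0)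
    (hc : 0 < c) : HasPowerDistrib (fun ω ↦ X ω ^ c) (p / c) μ := by
  intro t ⟨ht0, ht1⟩
  have hroot : t ^ c⁻¹ ∈ Icc (0 : ℝ) 1 :=
    ⟨rpow_nonneg ht0 _, rpow_le_one ht0 ht1 (inv_nonneg.mpr hc.le)⟩
  have hae : (fun ω ↦ X ω ^ c) ⁻¹' Iio t =ᵐ[μ] X ⁻¹' Iio (t ^ c⁻¹) := by
    filter_upwards [hX.ae_nonneg hp] with ω hω
    exact propext (lt_rpow_inv_iff_of_pos hω ht0 hc).symm
  rw [measure_congr hae, hX _ hroot, ← rpow_mul ht0, inv_mul_eq_div]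

lemma HasPowerDistrib.max {X Y : Ω → ℝ} {p q : ℝ} (hX : HasPowerDistrib X p μ)
    (hY : HasPowerDistrib Y q μ) (hXY : IndepFun X Y μ) (hpq : p + q ≠ 0) :
    HasPowerDistrib (fun ω ↦ Max.max (X ω) (Y ω)) (p + q) μ := by
  intro t ht
  have hpre : (fun ω ↦ Max.max (X ω) (Y ω)) ⁻¹' Iio t = X ⁻¹' Iio t ∩ Y ⁻¹' Iio t :=
    by ext ω; simp
  rw [hpre, hXY.measure_inter_preimage_eq_mul _ _ measurableSet_Iio measurableSet_Iio, hX t ht,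
    hY t ht, ← ENNReal.ofReal_mul (rpow_nonneg ht.1 _), rpow_add' ht.1 hpq]

lemma HasPowerDistrib.max_rpow_of_isUniform {X V : Ω → ℝ} {α δ : ℝ}
    (hX : HasPowerDistrib X α μ) (hα : 0 < α) (hδ : δ ∈ Ioo 0 α)
    (hV : pdf.IsUniform V (Ioo 0 1) μ) (hXV : IndepFun X V μ) :
    HasPowerDistrib (fun ω ↦ Max.max (X ω ^ (α / (α - δ))) (V ω ^ δ⁻¹)) α μ := by
  have hαδ : 0 < α - δ := sub_pos.mpr hδ.2
  have hpow : HasPowerDistrib (fun ω ↦ X ω ^ (α / (α - δ))) (α - δ) μ := by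
    convert hX.rpow hα.ne' (div_pos hα hαδ) using 1
    field_simp
  have hmax := hpow.max (hasPowerDistrib_rpow_inv_of_isUniform hV hδ.1)
    (hXV.comp (φ := fun x ↦ x ^ (α / (α - δ))) (ψ := fun x ↦ x ^ δ⁻¹)
      (by fun_prop) (by fun_prop))
    (by rw [sub_add_cancel]; exact hα.ne')
  rwa [sub_add_cancel] at hmax

end PowerDistrib

lemma indepFun_of_measurable_iSup_comap {ι Ω β γ : Type*} [MeasurableSpace Ω]
    [mβ : MeasurableSpace β] [MeasurableSpace γ] {μ : Measure Ω} {U : ι → Ω → β}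
    (hind : iIndepFun U μ) (hUm : ∀ i, Measurable (U i)) {S : Set ι} {k : ι} (hk : k ∉ S)
    {X : Ω → γ} (hX : Measurable[⨆ i ∈ S, mβ.comap (U i)] X) : IndepFun X (U k) μ := by
  have h := indep_iSup_of_disjoint (fun i ↦ (hUm i).comap_le) hind.iIndep
    (disjoint_singleton_right.mpr hk)
  rw [iSup_singleton] at h
  exact (IndepFun_iff_Indep _ _ _).mpr (indep_of_indep_of_le_left h hX.comap_le)

section Recursion

variable {Ω β γ : Type*} [mβ : MeasurableSpace β] [MeasurableSpace γ]
  {U : ℕ → Ω → β} {W : ℕ → Ω → γ} {g₀ : β → γ} {g : γ → β → γ}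

lemma measurable_iSup_comap_of_recursion (hg₀ : Measurable g₀)
    (hg : Measurable (Function.uncurry g))
    (hW0 : W 0 = fun ω ↦ g₀ (U 0 ω))
    (hWn : ∀ n, W (n + 1) = fun ω ↦ g (W n ω) (U (n + 1) ω))
    (n : ℕ) : Measurable[⨆ i ∈ Iic n, mβ.comap (U i)] (W n) := by
  have hU : ∀ n, Measurable[⨆ i ∈ Iic n, mβ.comap (U i)] (U n) := fun n ↦
    (comap_measurable (U n)).mono (le_iSup₂_of_le n self_mem_Iic le_rfl) le_rfl
  induction n with
  | zero => rw [hW0]; exact hg₀.comp (hU 0)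
  | succ n ih =>
    have hmono : ⨆ i ∈ Iic n, mβ.comap (U i) ≤ ⨆ i ∈ Iic (n + 1), mβ.comap (U i) :=
      biSup_mono fun i hi ↦ Iic_subset_Iic.mpr n.le_succ hi
    rw [hWn n]
    exact hg.comp ((ih.mono hmono le_rfl).prodMk (hU (n + 1)))

variable [MeasurableSpace Ω]

lemma measurable_of_recursion (hUm : ∀ i, Measurable (U i)) (hg₀ : Measurable g₀)
    (hg : Measurable (Function.uncurry g)) (hW0 : W 0 = fun ω ↦ g₀ (U 0 ω))
    (hWn : ∀ n, W (n + 1) = fun ω ↦ g (W n ω) (U (n + 1) ω)) (n : ℕ) : Measurable (W n) :=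
  (measurable_iSup_comap_of_recursion hg₀ hg hW0 hWn n).mono
    (iSup₂_le fun i _ ↦ (hUm i).comap_le) le_rfl

lemma indepFun_succ_of_recursion {μ : Measure Ω} (hind : iIndepFun U μ)
    (hUm : ∀ i, Measurable (U i)) (hg₀ : Measurable g₀) (hg : Measurable (Function.uncurry g))
    (hW0 : W 0 = fun ω ↦ g₀ (U 0 ω))
    (hWn : ∀ n, W (n + 1) = fun ω ↦ g (W n ω) (U (n + 1) ω))
    (n : ℕ) : IndepFun (W n) (U (n + 1)) μ :=
  indepFun_of_measurable_iSup_comap hind hUm (by simp)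
    (measurable_iSup_comap_of_recursion hg₀ hg hW0 hWn n)

end Recursion

theorem stmt_11 {Ω : Type*} [MeasureSpace Ω] [IsProbabilityMeasure (ℙ : Measure Ω)]
    (U : ℕ → Ω → ℝ) (hUm : ∀ n, Measurable (U n))
    (hUunif : ∀ n, pdf.IsUniform (U n) (Set.Ioo (0:ℝ) 1) ℙ)
    (hind : iIndepFun U ℙ)
    (α δ : ℝ) (hα : 0 < α) (hδ : δ ∈ Set.Ioo 0 α)
    (W : ℕ → Ω → ℝ)
    (hW0 : W 0 = fun ω => 1 - U 0 ω ^ (1 / α))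
    (hWn : ∀ n, W (n + 1) = fun ω =>
      min (1 - (1 - W n ω) ^ (α / (α - δ))) (1 - U (n + 1) ω ^ (1 / δ))) :
    ∀ n, ∀ w ∈ Set.Ioo (0:ℝ) 1,
      ℙ {ω | W n ω ≤ w} = ENNReal.ofReal (1 - (1 - w) ^ α) := by
  have hg₀ : Measurable fun u : ℝ ↦ 1 - u ^ (1 / α) := by fun_prop
  have hg : Measurable (Function.uncurry fun w u : ℝ ↦
      min (1 - (1 - w) ^ (α / (α - δ))) (1 - u ^ (1 / δ))) := by fun_prop
  have hS : ∀ n, HasPowerDistrib (fun ω ↦ 1 - W n ω) α ℙ := by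
    intro n
    induction n with
    | zero => simpa [hW0, one_div] using hasPowerDistrib_rpow_inv_of_isUniform (hUunif 0) hα
    | succ n ih =>
      convert ih.max_rpow_of_isUniform hα hδ (hUunif (n + 1))
        ((indepFun_succ_of_recursion hind hUm hg₀ hg hW0 hWn n).comp (φ := fun x ↦ 1 - x)
          (by fun_prop) measurable_id) using 2 with ω
      rw [hWn n]
      simp only [one_div, min_sub_sub_left, sub_sub_cancel]
  intro n w ⟨hw0, hw1⟩
  have ht : 1 - w ∈ Icc (0 : ℝ) 1 := ⟨by linarith, by linarith⟩
  have hWm := measurable_of_recursion hUm hg₀ hg hW0 hWn n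
  have hcompl : {ω | W n ω ≤ w} = ((fun ω ↦ 1 - W n ω) ⁻¹' Iio (1 - w))ᶜ := by
    ext; simp
  rw [hcompl, prob_compl_eq_one_sub (measurableSet_Iio.preimage (by fun_prop)), hS n _ ht,
    ← ENNReal.ofReal_one, ← ENNReal.ofReal_sub _ (rpow_nonneg ht.1 _)]
end

section
/- Let α > 0, δ ∈ (0, α), W*_0 = 1 - U_0^(1/α) with U_0, U_1 i.i.d. Uniform(0,1), and W*_1 = min{1 - (1 - W*_0)^(α/(α-δ)), 1 - U_1^(1/δ)}. Then the joint CDF is P(W*_0 ≤ w_0, W*_1 ≤ w_1) = 1 - (1-w_0)^α - (1-w_1)^α + (1-w_1)^δ · min{(1-w_0)^α, (1-w_1)^(α-δ)} for 0 < w_0, w_1 < 1. -/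
/-!
Off a null set, `U₀` and `U₁` lie in `(0, 1)`, where inverting the powers shows that
`W₀ ≤ w₀ ↔ a ≤ U₀` and `W₁ ≤ w₁ ↔ c ≤ U₀ ∨ b ≤ U₁`, with `a = (1 - w₀)^α`, `b = (1 - w₁)^δ` and
`c = (1 - w₁)^(α - δ)`. The event is thus `{a ≤ U₀}` minus the rectangle
`{a ≤ U₀ < c} ∩ {U₁ < b}`, which has probability `(c - min a c) * b` by independence; since
`b * c = (1 - w₁)^α`, this gives the formula.
-/

open MeasureTheory ProbabilityTheory Real Set

lemma one_sub_rpow_inv_le_iff {p u w : ℝ} (hp : 0 < p) (hu : 0 ≤ u) (hw : w ≤ 1) :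
    1 - u ^ p⁻¹ ≤ w ↔ (1 - w) ^ p ≤ u := by
  rw [sub_le_comm, le_rpow_inv_iff_of_pos (sub_nonneg.2 hw) hu hp]

namespace MeasureTheory.pdf.IsUniform

variable {Ω : Type*} [MeasurableSpace Ω] {μ : Measure Ω} {U V : Ω → ℝ}

lemma measure_preimage_eq_volume_inter (hU : IsUniform U (Ioo 0 1) μ) {A : Set ℝ}
    (hA : MeasurableSet A) : μ (U ⁻¹' A) = volume (Ioo 0 1 ∩ A) := by
  simp [hU.measure_preimage (by simp) (by simp) hA]

lemma ae_mem_Ioo_zero_one (hU : IsUniform U (Ioo 0 1) μ) : ∀ᵐ ω ∂μ, U ω ∈ Ioo 0 1 := by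
  have := hU.measure_preimage_eq_volume_inter (measurableSet_Ioo (a := (0 : ℝ)) (b := 1)).compl
  rw [inter_compl_self, measure_empty] at this
  exact ae_iff.2 this

lemma measure_preimage_Ici (hU : IsUniform U (Ioo 0 1) μ) {a : ℝ} (ha : 0 < a) :
    μ (U ⁻¹' Ici a) = ENNReal.ofReal (1 - a) := by
  have : Ioo 0 1 ∩ Ici a = Ico a 1 := by
    ext x
    simp only [mem_inter_iff, mem_Ioo, mem_Ici, mem_Ico]
    exact ⟨fun h => ⟨h.2, h.1.2⟩, fun h => ⟨⟨ha.trans_le h.1, h.2⟩, h.1⟩⟩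
  rw [hU.measure_preimage_eq_volume_inter measurableSet_Ici, this, volume_Ico]

lemma measure_preimage_Iio (hU : IsUniform U (Ioo 0 1) μ) {b : ℝ} (hb : b ≤ 1) :
    μ (U ⁻¹' Iio b) = ENNReal.ofReal b := by
  rw [hU.measure_preimage_eq_volume_inter measurableSet_Iio, Ioo_inter_Iio, min_eq_right hb,
    volume_Ioo, sub_zero]

lemma measure_preimage_Ico (hU : IsUniform U (Ioo 0 1) μ) {a c : ℝ} (ha : 0 < a) (hc : c ≤ 1) :
    μ (U ⁻¹' Ico a c) = ENNReal.ofReal (c - a) := by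
  rw [hU.measure_preimage_eq_volume_inter measurableSet_Ico,
    inter_eq_right.2 (Ico_subset_Ioo ha hc), volume_Ico]

lemma measure_le_and_le_or_le (hU : IsUniform U (Ioo 0 1) μ) (hV : IsUniform V (Ioo 0 1) μ)
    (hind : IndepFun U V μ) {a b c : ℝ} (ha : 0 < a) (hb : 0 ≤ b) (hb1 : b ≤ 1) (hc : c ≤ 1) :
    μ {ω | a ≤ U ω ∧ (c ≤ U ω ∨ b ≤ V ω)} = ENNReal.ofReal (1 - a - b * c + b * min a c) := by
  set corner := U ⁻¹' Ico a c ∩ V ⁻¹' Iio b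
  have hset : {ω | a ≤ U ω ∧ (c ≤ U ω ∨ b ≤ V ω)} = U ⁻¹' Ici a \ corner := by
    ext ω
    simp only [corner, mem_ofPred_eq, mem_sdiff, mem_inter_iff, mem_preimage, mem_Ici, mem_Ico,
      mem_Iio]
    grind
  -- `c - min a c` is the length of `[a, c)` also when that interval is empty
  have hcorner : μ corner = ENNReal.ofReal ((c - min a c) * b) := by
    rw [hind.measure_inter_preimage_eq_mul _ _ measurableSet_Ico measurableSet_Iio,
      hU.measure_preimage_Ico ha hc, hV.measure_preimage_Iio hb1,
      ENNReal.ofReal_mul (sub_nonneg.2 (min_le_right a c))]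
    rcases le_total a c with h | h
    · rw [min_eq_left h]
    · simp [h]
  have hnull : NullMeasurableSet corner μ :=
    ((hU.aemeasurable (by simp) (by simp)).nullMeasurableSet_preimage measurableSet_Ico).inter
      ((hV.aemeasurable (by simp) (by simp)).nullMeasurableSet_preimage measurableSet_Iio)
  have hsub : corner ⊆ U ⁻¹' Ici a := inter_subset_left.trans (preimage_mono Ico_subset_Ici_self)
  rw [hset, measure_sdiff hsub hnull (hcorner.trans_ne ENNReal.ofReal_ne_top), hcorner,
    hU.measure_preimage_Ici ha,
    ← ENNReal.ofReal_sub _ (mul_nonneg (sub_nonneg.2 (min_le_right a c)) hb)]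
  congr 1
  ring

end MeasureTheory.pdf.IsUniform

theorem stmt_12_general {Ω : Type*} [MeasureSpace Ω]
    (U₀ U₁ : Ω → ℝ)
    (hU₀ : pdf.IsUniform U₀ (Set.Ioo (0:ℝ) 1) ℙ)
    (hU₁ : pdf.IsUniform U₁ (Set.Ioo (0:ℝ) 1) ℙ)
    (hind : IndepFun U₀ U₁ ℙ)
    (α δ : ℝ) (hα : 0 < α) (hδ : δ ∈ Set.Ioo 0 α)
    (W₀ W₁ : Ω → ℝ)
    (hW₀ : W₀ = fun ω => 1 - U₀ ω ^ (1 / α))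
    (hW₁ : W₁ = fun ω =>
      min (1 - (1 - W₀ ω) ^ (α / (α - δ))) (1 - U₁ ω ^ (1 / δ))) :
    ∀ w₀ ∈ Set.Ioo (0:ℝ) 1, ∀ w₁ ∈ Set.Ioo (0:ℝ) 1,
      ℙ {ω | W₀ ω ≤ w₀ ∧ W₁ ω ≤ w₁}
        = ENNReal.ofReal (1 - (1 - w₀) ^ α - (1 - w₁) ^ α
            + (1 - w₁) ^ δ * min ((1 - w₀) ^ α) ((1 - w₁) ^ (α - δ))) := by
  rintro w₀ ⟨-, hw₀⟩ w₁ ⟨hw₁0, hw₁⟩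
  obtain ⟨hδ, hδα⟩ := hδ
  have hαδ : 0 < α - δ := sub_pos.2 hδα
  have hevent : {ω | W₀ ω ≤ w₀ ∧ W₁ ω ≤ w₁} =ᵐ[ℙ] {ω | (1 - w₀) ^ α ≤ U₀ ω ∧
      ((1 - w₁) ^ (α - δ) ≤ U₀ ω ∨ (1 - w₁) ^ δ ≤ U₁ ω)} := by
    refine Filter.eventuallyEq_set.2 ?_
    filter_upwards [hU₀.ae_mem_Ioo_zero_one, hU₁.ae_mem_Ioo_zero_one] with ω hω₀ hω₁
    have hexp : (U₀ ω ^ α⁻¹) ^ (α / (α - δ)) = U₀ ω ^ (α - δ)⁻¹ := by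
      rw [← rpow_mul hω₀.1.le]
      congr 1
      field_simp
    simp only [hW₁, hW₀, one_div, sub_sub_cancel, hexp, min_le_iff,
      one_sub_rpow_inv_le_iff hα hω₀.1.le hw₀.le, one_sub_rpow_inv_le_iff hαδ hω₀.1.le hw₁.le,
      one_sub_rpow_inv_le_iff hδ hω₁.1.le hw₁.le]
  rw [measure_congr hevent, hU₀.measure_le_and_le_or_le hU₁ hind
    (rpow_pos_of_pos (sub_pos.2 hw₀) α) (rpow_nonneg (sub_nonneg.2 hw₁.le) δ)
    (rpow_le_one (sub_nonneg.2 hw₁.le) (by linarith) hδ.le)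
    (rpow_le_one (sub_nonneg.2 hw₁.le) (by linarith) hαδ.le),
    ← rpow_add (sub_pos.2 hw₁), add_sub_cancel]

theorem stmt_12 {Ω : Type*} [MeasureSpace Ω] [IsProbabilityMeasure (ℙ : Measure Ω)]
    (U₀ U₁ : Ω → ℝ) (hU₀m : Measurable U₀) (hU₁m : Measurable U₁)
    (hU₀ : pdf.IsUniform U₀ (Set.Ioo (0:ℝ) 1) ℙ)
    (hU₁ : pdf.IsUniform U₁ (Set.Ioo (0:ℝ) 1) ℙ)
    (hind : IndepFun U₀ U₁ ℙ)
    (α δ : ℝ) (hα : 0 < α) (hδ : δ ∈ Set.Ioo 0 α)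
    (W₀ W₁ : Ω → ℝ)
    (hW₀ : W₀ = fun ω => 1 - U₀ ω ^ (1 / α))
    (hW₁ : W₁ = fun ω =>
      min (1 - (1 - W₀ ω) ^ (α / (α - δ))) (1 - U₁ ω ^ (1 / δ))) :
    ∀ w₀ ∈ Set.Ioo (0:ℝ) 1, ∀ w₁ ∈ Set.Ioo (0:ℝ) 1,
      ℙ {ω | W₀ ω ≤ w₀ ∧ W₁ ω ≤ w₁}
        = ENNReal.ofReal (1 - (1 - w₀) ^ α - (1 - w₁) ^ α
            + (1 - w₁) ^ δ * min ((1 - w₀) ^ α) ((1 - w₁) ^ (α - δ))) :=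
  stmt_12_general U₀ U₁ hU₀ hU₁ hind α δ hα hδ W₀ W₁ hW₀ hW₁
end

section
/- For the A-M CPFD process with parameters α > 0 and δ ∈ (0, α): with W*_0 = 1 - U_0^(1/α) and W*_1 = min{1 - (1-W*_0)^(α/(α-δ)), 1 - U_1^(1/δ)} where U_0, U_1 are i.i.d. Uniform(0,1), we have P(W*_1 < W*_0) = δ/(α+δ). -/
open MeasureTheory ProbabilityTheory Real Set
open scoped ENNReal

/-!
Almost surely `U₀ ∈ (0,1)`, so `1 - W*₀ = U₀^(1/α)` and the first term of the minimum is
`1 - U₀^(1/(α-δ)) > W*₀`. Hence `W*₁ < W*₀` exactly when `1 - U₁^(1/δ) < 1 - U₀^(1/α)`, i.e. when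
`U₀^(δ/α) < U₁`. For independent uniforms the pair `(U₀, U₁)` is uniform on the unit square, and
this event is the region above the graph of `x ↦ x^c`, `c = δ/α`, whose area is
`∫₀¹ (1 - x^c) dx = c/(c+1) = δ/(α+δ)`.
-/

namespace MeasureTheory.pdf.IsUniform

variable {Ω E : Type*} [MeasurableSpace Ω] [MeasurableSpace E] {P : Measure Ω} {μ : Measure E}
  {X : Ω → E} {s : Set E}

theorem map_eq_restrict (hs : μ s = 1) (hX : IsUniform X s P μ) : P.map X = μ.restrict s := by
  rw [hX, ProbabilityTheory.cond, hs, inv_one, one_smul]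

theorem ae_mem (hs : MeasurableSet s) (hns : μ s ≠ 0) (hnt : μ s ≠ ∞) (hX : IsUniform X s P μ) :
    ∀ᵐ ω ∂P, X ω ∈ s :=
  ae_of_ae_map (hX.aemeasurable hns hnt) (hX ▸ Measure.ae_smul_measure (ae_restrict_mem hs) _)

end MeasureTheory.pdf.IsUniform

theorem integral_Ioo_one_sub_rpow {c : ℝ} (hc : -1 < c) :
    ∫ x in Ioo (0 : ℝ) 1, (1 - x ^ c) = c / (c + 1) := by
  have hc' : c + 1 ≠ 0 := by linarith
  rw [← integral_Ioc_eq_integral_Ioo, ← intervalIntegral.integral_of_le zero_le_one,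
    intervalIntegral.integral_sub intervalIntegrable_const
      (intervalIntegral.intervalIntegrable_rpow' hc),
    integral_rpow (Or.inl hc), intervalIntegral.integral_const, one_rpow, zero_rpow hc']
  field_simp
  ring

section IndependentUniforms

variable {Ω : Type*} [MeasurableSpace Ω] {P : Measure Ω} {U V : Ω → ℝ}

theorem measure_lt_of_indepFun_uniform (hU : pdf.IsUniform U (Ioo 0 1) P)
    (hV : pdf.IsUniform V (Ioo 0 1) P) (hUV : IndepFun U V P) {f : ℝ → ℝ} (hf : Measurable f)
    (hfi : IntegrableOn f (Ioo 0 1)) (hf01 : ∀ x ∈ Ioo (0 : ℝ) 1, f x ∈ Icc 0 1) :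
    P {ω | f (U ω) < V ω} = ENNReal.ofReal (∫ x in Ioo 0 1, (1 - f x)) := by
  have hvol : volume (Ioo (0 : ℝ) 1) = 1 := by simp
  have hUm := hU.aemeasurable (by simp) (by simp)
  have hVm := hV.aemeasurable (by simp) (by simp)
  have hUlaw := hU.map_eq_restrict hvol
  have hVlaw := hV.map_eq_restrict hvol
  have hS : MeasurableSet {p : ℝ × ℝ | f p.1 < p.2} :=
    measurableSet_lt (hf.comp measurable_fst) measurable_snd
  have hlaw : P.map (fun ω => (U ω, V ω)) = volume.restrict (Ioo 0 1 ×ˢ Ioo 0 1) := by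
    rw [(indepFun_iff_map_prod_eq_prod_map_map' hUm hVm (hUlaw ▸ inferInstance)
      (hVlaw ▸ inferInstance)).1 hUV, hUlaw, hVlaw, Measure.prod_restrict, Measure.volume_eq_prod]
  have hregion :
      {p : ℝ × ℝ | f p.1 < p.2} ∩ Ioo 0 1 ×ˢ Ioo 0 1 = regionBetween f 1 (Ioo 0 1) := by
    ext ⟨x, y⟩
    simp only [regionBetween, mem_inter_iff, mem_ofPred_eq, mem_prod, mem_Ioo, Pi.one_apply]
    constructor
    · rintro ⟨hxy, hx, -, hy⟩
      exact ⟨hx, hxy, hy⟩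
    · rintro ⟨hx, hxy, hy⟩
      exact ⟨hxy, hx, (hf01 x hx).1.trans_lt hxy, hy⟩
  calc P {ω | f (U ω) < V ω} = P.map (fun ω => (U ω, V ω)) {p | f p.1 < p.2} :=
        (Measure.map_apply_of_aemeasurable (hUm.prodMk hVm) hS).symm
    _ = volume (regionBetween f 1 (Ioo 0 1)) := by
        rw [hlaw, Measure.restrict_apply hS, hregion]
    _ = ENNReal.ofReal (∫ x in Ioo 0 1, (1 - f x)) :=
        volume_regionBetween_eq_integral hfi (integrableOn_const (by simp)) measurableSet_Ioo
          fun x hx => (hf01 x hx).2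

theorem measure_rpow_lt_of_indepFun_uniform (hU : pdf.IsUniform U (Ioo 0 1) P)
    (hV : pdf.IsUniform V (Ioo 0 1) P) (hUV : IndepFun U V P) {c : ℝ} (hc : 0 < c) :
    P {ω | U ω ^ c < V ω} = ENNReal.ofReal (c / (c + 1)) := by
  have hint : IntegrableOn (fun x : ℝ => x ^ c) (Ioo 0 1) :=
    ((intervalIntegral.intervalIntegrable_rpow' (by linarith)).1).mono_set Ioo_subset_Ioc_self
  have hmeas : Measurable fun x : ℝ => x ^ c := by fun_prop
  rw [measure_lt_of_indepFun_uniform hU hV hUV hmeas hint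
      fun x hx => ⟨rpow_nonneg hx.1.le c, (rpow_lt_one hx.1.le hx.2 hc).le⟩,
    integral_Ioo_one_sub_rpow (by linarith)]

end IndependentUniforms

theorem one_sub_rpow_min_lt_iff {α δ u v : ℝ} (hδ : 0 < δ) (hδα : δ < α)
    (hu : u ∈ Ioo (0 : ℝ) 1) (hv : v ∈ Ioo (0 : ℝ) 1) :
    min (1 - (1 - (1 - u ^ (1 / α))) ^ (α / (α - δ))) (1 - v ^ (1 / δ)) < 1 - u ^ (1 / α) ↔
      u ^ (δ / α) < v := by
  have hα : 0 < α := hδ.trans hδα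
  have hαδ : 0 < α - δ := sub_pos.2 hδα
  have hfirst : (1 - (1 - u ^ (1 / α))) ^ (α / (α - δ)) = u ^ (1 / (α - δ)) := by
    rw [sub_sub_cancel, ← rpow_mul hu.1.le]
    congr 1
    field_simp
  have hfirst_lt : u ^ (1 / (α - δ)) < u ^ (1 / α) :=
    (rpow_lt_rpow_left_iff_of_base_lt_one hu.1 hu.2).2
      (one_div_lt_one_div_of_lt hαδ (by linarith))
  have hroot : (u ^ (δ / α)) ^ (1 / δ) = u ^ (1 / α) := by
    rw [← rpow_mul hu.1.le]
    congr 1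
    field_simp
  rw [hfirst, min_lt_iff, or_iff_right (by linarith), sub_lt_sub_iff_left,
    ← rpow_lt_rpow_iff (rpow_nonneg hu.1.le _) hv.1.le (one_div_pos.2 hδ), hroot]

theorem stmt_13_general {Ω : Type*} [MeasureSpace Ω]
    (U₀ U₁ : Ω → ℝ)
    (hU₀ : pdf.IsUniform U₀ (Set.Ioo (0:ℝ) 1) ℙ)
    (hU₁ : pdf.IsUniform U₁ (Set.Ioo (0:ℝ) 1) ℙ)
    (hind : IndepFun U₀ U₁ ℙ)
    (α δ : ℝ) (hα : 0 < α) (hδ : δ ∈ Set.Ioo 0 α)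
    (W₀ W₁ : Ω → ℝ)
    (hW₀ : W₀ = fun ω => 1 - U₀ ω ^ (1 / α))
    (hW₁ : W₁ = fun ω =>
      min (1 - (1 - W₀ ω) ^ (α / (α - δ))) (1 - U₁ ω ^ (1 / δ))) :
    ℙ {ω | W₁ ω < W₀ ω} = ENNReal.ofReal (δ / (α + δ)) := by
  have hevent : {ω | W₁ ω < W₀ ω} =ᵐ[ℙ] {ω | U₀ ω ^ (δ / α) < U₁ ω} := by
    filter_upwards [pdf.IsUniform.ae_mem measurableSet_Ioo (by simp) (by simp) hU₀,
      pdf.IsUniform.ae_mem measurableSet_Ioo (by simp) (by simp) hU₁] with ω h₀ h₁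
    subst hW₀ hW₁
    exact propext (one_sub_rpow_min_lt_iff hδ.1 hδ.2 h₀ h₁)
  rw [measure_congr hevent, measure_rpow_lt_of_indepFun_uniform hU₀ hU₁ hind (div_pos hδ.1 hα)]
  congr 1
  field_simp
  ring

theorem stmt_13 {Ω : Type*} [MeasureSpace Ω] [IsProbabilityMeasure (ℙ : Measure Ω)]
    (U₀ U₁ : Ω → ℝ) (hU₀m : Measurable U₀) (hU₁m : Measurable U₁)
    (hU₀ : pdf.IsUniform U₀ (Set.Ioo (0:ℝ) 1) ℙ)
    (hU₁ : pdf.IsUniform U₁ (Set.Ioo (0:ℝ) 1) ℙ)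
    (hind : IndepFun U₀ U₁ ℙ)
    (α δ : ℝ) (hα : 0 < α) (hδ : δ ∈ Set.Ioo 0 α)
    (W₀ W₁ : Ω → ℝ)
    (hW₀ : W₀ = fun ω => 1 - U₀ ω ^ (1 / α))
    (hW₁ : W₁ = fun ω =>
      min (1 - (1 - W₀ ω) ^ (α / (α - δ))) (1 - U₁ ω ^ (1 / δ))) :
    ℙ {ω | W₁ ω < W₀ ω} = ENNReal.ofReal (δ / (α + δ)) :=
  stmt_13_general U₀ U₁ hU₀ hU₁ hind α δ hα hδ W₀ W₁ hW₀ hW₁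
end

section
/- Let σ > 0, α > δ > 0, {U_n} i.i.d. Uniform(0,1), T*_0 = σ U_0^(-1/α), and T*_n = σ min{(T*_{n-1}/σ)^(α/(α-δ)), U_n^(-1/δ)} for n ≥ 1. Then for every n ≥ 0, P(T*_n > t) = (t/σ)^(-α) for t > σ, i.e. T*_n ~ Pareto(I)(σ, α). -/
open MeasureTheory ProbabilityTheory Real Set

private lemma aux_rpow_iff {u v β : ℝ} (hu : 0 < u) (hv : 0 < v) (hβ : 0 < β) :
    v < u ^ (-(1/β)) ↔ u < v ^ (-β) := by
  have h : -(1/β) = (-β)⁻¹ := by rw [one_div, ← inv_neg]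
  rw [h]
  exact Real.lt_rpow_inv_iff_of_neg hv hu (neg_lt_zero.mpr hβ)

theorem stmt_18 {Ω : Type*} [MeasureSpace Ω] [IsProbabilityMeasure (ℙ : Measure Ω)]
    (U : ℕ → Ω → ℝ) (hUm : ∀ n, Measurable (U n))
    (hUunif : ∀ n, pdf.IsUniform (U n) (Set.Ioo (0:ℝ) 1) ℙ)
    (hind : iIndepFun U ℙ)
    (σ α δ : ℝ) (hσ : 0 < σ) (hα : 0 < α) (hδ : δ ∈ Set.Ioo 0 α)
    (T : ℕ → Ω → ℝ)
    (hT0 : T 0 = fun ω => σ * U 0 ω ^ (-(1 / α)))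
    (hTn : ∀ n, T (n + 1) = fun ω =>
      σ * min ((T n ω / σ) ^ (α / (α - δ))) (U (n + 1) ω ^ (-(1 / δ)))) :
    ∀ n, ∀ t > σ, ℙ {ω | t < T n ω} = ENNReal.ofReal ((t / σ) ^ (-α)) := by
  obtain ⟨hδ0, hδα⟩ := hδ
  have hvol : (volume (Set.Ioo (0:ℝ) 1)) = 1 := by simp
  -- uniform cdf
  have hcdf : ∀ n, ∀ c : ℝ, 0 < c → c ≤ 1 → ℙ {ω | U n ω < c} = ENNReal.ofReal c := by
    intro n c hc0 hc1
    have := (hUunif n).measure_preimage (by simp [hvol]) (by simp [hvol]) measurableSet_Iio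
      (A := Set.Iio c)
    rw [hvol] at this
    have hint : Set.Ioo (0:ℝ) 1 ∩ Set.Iio c = Set.Ioo 0 c := by
      rw [Set.Ioo_inter_Iio, min_eq_right hc1]
    rw [hint] at this
    rw [show {ω | U n ω < c} = U n ⁻¹' Set.Iio c from rfl]
    simpa [Real.volume_Ioo] using this
  -- a.e. membership
  have hae : ∀ n, ∀ᵐ ω ∂(ℙ : Measure Ω), U n ω ∈ Set.Ioo (0:ℝ) 1 := by
    intro n
    rw [ae_iff]
    have h := (hUunif n).measure_preimage (by simp [hvol]) (by simp [hvol])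
      (measurableSet_Ioo (a := (0:ℝ)) (b := 1)).compl
    have h2 : {a | ¬ U n a ∈ Set.Ioo (0:ℝ) 1} = U n ⁻¹' (Set.Ioo (0:ℝ) 1)ᶜ := rfl
    rw [h2]
    simpa using h
  -- measurability of T
  have hTm : ∀ n, Measurable (T n) := by
    intro n
    induction n with
    | zero => rw [hT0]; exact (measurable_const.mul ((hUm 0).pow measurable_const))
    | succ n ih =>
      rw [hTn n]
      exact measurable_const.mul (((ih.div_const σ).pow measurable_const).min ((hUm (n+1)).pow measurable_const))
  -- independence of T n and U (n+1)
  have hTind : ∀ n, IndepFun (T n) (U (n+1)) ℙ := by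
    intro n
    have hrep : ∀ m, ∃ g : ((Finset.range (m+1) : Finset ℕ) → ℝ) → ℝ, Measurable g ∧
        T m = fun ω => g (fun i => U i ω) := by
      intro m
      induction m with
      | zero =>
        refine ⟨fun v => σ * (v ⟨0, by simp⟩) ^ (-(1/α)), ?_, ?_⟩
        · exact measurable_const.mul ((measurable_pi_apply _).pow measurable_const)
        · rw [hT0]
      | succ m ih =>
        obtain ⟨g, hgm, hgT⟩ := ih
        refine ⟨fun v => σ * min ((g (fun i => v ⟨i.1, Finset.mem_range.mpr
            (Nat.lt_succ_of_lt (Finset.mem_range.mp i.2))⟩) / σ) ^ (α / (α - δ)))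
            ((v ⟨m+1, Finset.self_mem_range_succ (m+1)⟩) ^ (-(1/δ))), ?_, ?_⟩
        · have hr : Measurable fun (v : ((Finset.range (m+2) : Finset ℕ) → ℝ)) =>
              (fun i : (Finset.range (m+1) : Finset ℕ) => v ⟨i.1, Finset.mem_range.mpr
                (Nat.lt_succ_of_lt (Finset.mem_range.mp i.2))⟩) :=
            measurable_pi_lambda _ (fun i => measurable_pi_apply _)
          exact measurable_const.mul ((((hgm.comp hr).div_const σ).pow measurable_const).min
            ((measurable_pi_apply _).pow measurable_const))
        · rw [hTn m, hgT]
    obtain ⟨g, hgm, hgT⟩ := hrep n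
    have hdisj : Disjoint (Finset.range (n+1)) ({n+1} : Finset ℕ) := by
      simp [Finset.disjoint_singleton_right]
    have hbase := hind.indepFun_finset (Finset.range (n+1)) {n+1} hdisj hUm
    have := hbase.comp (φ := g)
      (ψ := fun v : (({n+1} : Finset ℕ) → ℝ) => v ⟨n+1, Finset.mem_singleton_self _⟩)
      hgm (measurable_pi_apply _ : Measurable fun v : (({n+1} : Finset ℕ) → ℝ) => v ⟨n+1, Finset.mem_singleton_self _⟩)
    rw [hgT]
    exact this
  -- main induction
  intro n
  induction n with
  | zero =>
    intro t ht
    have htσ : (1:ℝ) < t / σ := (one_lt_div hσ).mpr ht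
    have hc0 : 0 < (t/σ) ^ (-α) := Real.rpow_pos_of_pos (by linarith) _
    have hc1 : (t/σ) ^ (-α) < 1 := Real.rpow_lt_one_of_one_lt_of_neg htσ (by linarith)
    have heq : {ω | t < T 0 ω} =ᵐ[(ℙ : Measure Ω)] {ω | U 0 ω < (t/σ) ^ (-α)} := by
      filter_upwards [hae 0] with ω hω
      obtain ⟨hu0, hu1⟩ := hω
      rw [eq_iff_iff, hT0]
      show t < σ * U 0 ω ^ (-(1 / α)) ↔ U 0 ω < (t / σ) ^ (-α)
      rw [← div_lt_iff₀' hσ]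
      exact aux_rpow_iff hu0 (lt_trans one_pos htσ) hα
    rw [measure_congr heq, hcdf 0 _ hc0 hc1.le]
  | succ n ih =>
    intro t ht
    have htσ : (1:ℝ) < t / σ := (one_lt_div hσ).mpr ht
    have hr0 : (0:ℝ) < t / σ := lt_trans one_pos htσ
    set r := t / σ with hr
    have hαδ : (0:ℝ) < α - δ := by linarith
    set s := σ * r ^ ((α - δ)/α) with hs
    have hrp1 : (1:ℝ) < r ^ ((α - δ)/α) :=
      Real.one_lt_rpow_iff_of_pos hr0 |>.mpr (Or.inl ⟨htσ, by positivity⟩)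
    have hsσ : σ < s := by
      rw [hs]; nlinarith
    have hc0 : 0 < r ^ (-δ) := Real.rpow_pos_of_pos hr0 _
    have hc1 : r ^ (-δ) < 1 := Real.rpow_lt_one_of_one_lt_of_neg htσ (by linarith)
    -- a.e. T n > σ
    have hTgt : ∀ᵐ ω ∂(ℙ : Measure Ω), σ < T n ω := by
      have hone : ℙ {ω | σ < T n ω} = 1 := by
        have hub : ∀ k : ℕ, ENNReal.ofReal ((1 + 1/((k:ℝ)+1)) ^ (-α)) ≤ ℙ {ω | σ < T n ω} := by
          intro k
          have hk : (0:ℝ) < 1/((k:ℝ)+1) := by positivity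
          have h1 : σ < σ * (1 + 1/((k:ℝ)+1)) := by nlinarith
          have := ih (σ * (1 + 1/((k:ℝ)+1))) h1
          rw [mul_div_cancel_left₀ _ hσ.ne'] at this
          calc ENNReal.ofReal ((1 + 1/((k:ℝ)+1)) ^ (-α))
              = ℙ {ω | σ * (1 + 1/((k:ℝ)+1)) < T n ω} := this.symm
            _ ≤ ℙ {ω | σ < T n ω} := by
                apply measure_mono
                intro ω hω
                exact lt_trans h1 hω
        have htend : Filter.Tendsto (fun k : ℕ => ENNReal.ofReal ((1 + 1/((k:ℝ)+1)) ^ (-α)))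
            Filter.atTop (nhds 1) := by
          have h1 : Filter.Tendsto (fun k : ℕ => (1 + 1/((k:ℝ)+1))) Filter.atTop (nhds 1) := by
            have := tendsto_one_div_add_atTop_nhds_zero_nat (𝕜 := ℝ)
            simpa using (tendsto_const_nhds (x := (1:ℝ))).add this
          have h2 : Filter.Tendsto (fun k : ℕ => (1 + 1/((k:ℝ)+1)) ^ (-α)) Filter.atTop
              (nhds 1) := by
            have hc : ContinuousAt (fun x : ℝ => x ^ (-α)) 1 :=
              (Real.continuousAt_rpow_const 1 (-α) (Or.inl one_ne_zero))
            have := hc.tendsto.comp h1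
            simpa [Function.comp_def] using this
          have := (ENNReal.continuous_ofReal.tendsto 1).comp h2
          simpa [Function.comp_def] using this
        have hle : (1:ENNReal) ≤ ℙ {ω | σ < T n ω} := le_of_tendsto' htend hub
        exact le_antisymm (prob_le_one) hle
      have hmeas : MeasurableSet {ω | σ < T n ω} := measurableSet_lt measurable_const (hTm n)
      rw [ae_iff]
      have : {ω | ¬ σ < T n ω} = {ω | σ < T n ω}ᶜ := by ext ω; simp
      rw [this, measure_compl hmeas (measure_ne_top _ _), hone, measure_univ]
      simp
    -- event decomposition
    have heq : {ω | t < T (n+1) ω} =ᵐ[(ℙ : Measure Ω)]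
        (((T n) ⁻¹' (Set.Ioi s) ∩ (U (n+1)) ⁻¹' (Set.Iio (r ^ (-δ)))) : Set Ω) := by
      filter_upwards [hae (n+1), hTgt] with ω hu hTσ
      obtain ⟨hu0, hu1⟩ := hu
      have hT0' : 0 < T n ω / σ := div_pos (lt_trans hσ hTσ) hσ
      rw [eq_iff_iff, hTn n]
      show t < σ * min ((T n ω / σ) ^ (α / (α - δ))) (U (n+1) ω ^ (-(1/δ))) ↔
        T n ω ∈ Set.Ioi s ∧ U (n+1) ω ∈ Set.Iio (r ^ (-δ))
      simp only [Set.mem_Ioi, Set.mem_Iio]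
      rw [← div_lt_iff₀' hσ, ← hr, lt_min_iff]
      constructor
      · rintro ⟨h1, h2⟩
        refine ⟨?_, (aux_rpow_iff hu0 hr0 hδ0).mp h2⟩
        have hexp : α / (α - δ) = ((α - δ)/α)⁻¹ := by
          rw [inv_div]
        rw [hexp, Real.lt_rpow_inv_iff_of_pos hr0.le hT0'.le (by positivity)] at h1
        rw [hs, mul_comm, ← lt_div_iff₀ hσ]
        exact h1
      · rintro ⟨h1, h2⟩
        constructor
        · have hexp : α / (α - δ) = ((α - δ)/α)⁻¹ := by
            rw [inv_div]
          rw [hexp, Real.lt_rpow_inv_iff_of_pos hr0.le hT0'.le (by positivity)]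
          rw [hs, mul_comm, ← lt_div_iff₀ hσ] at h1
          exact h1
        · exact (aux_rpow_iff hu0 hr0 hδ0).mpr h2
    rw [measure_congr heq]
    have hmul := (hTind n).measure_inter_preimage_eq_mul (Set.Ioi s) (Set.Iio (r ^ (-δ)))
      measurableSet_Ioi measurableSet_Iio
    rw [hmul]
    have hA : ℙ ((T n) ⁻¹' (Set.Ioi s)) = ENNReal.ofReal (r ^ (δ - α)) := by
      have h := ih s hsσ
      rw [hs, mul_div_cancel_left₀ _ hσ.ne', ← Real.rpow_mul hr0.le] at h
      have hexp : (α - δ)/α * (-α) = δ - α := by field_simp; ring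
      rw [hexp] at h
      exact h
    have hB : ℙ ((U (n+1)) ⁻¹' (Set.Iio (r ^ (-δ)))) = ENNReal.ofReal (r ^ (-δ)) :=
      hcdf (n+1) _ hc0 hc1.le
    rw [hA, hB, ← ENNReal.ofReal_mul (by positivity), ← Real.rpow_add hr0]
    ring_nf
end
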